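/- Let ν > 1 and 1/ν + 1/ν² < F < 2. Then (−ν−1+√(8F²ν⁴+ν²+2ν+1))/(2ν²(ν+1)) > F/√(2ν(ν+1)). Equivalently, H_* > F√H_R/√(2(√H_R+1)) with H_R := 1/ν² and H_* := (−ν−1+√(8F²ν⁴+ν²+2ν+1))/(2ν²(ν+1)). -/

import Mathlib

/-!
Clearing denominators with `s := √(2ν(ν+1))`, so that `2ν(ν+1)/s = s`, the inequality becomes
`ν + 1 + Fνs < √(8F²ν⁴ + (ν+1)²)`. After squaring and dividing by `2Fν` this is
`(ν+1)s < Fν²(3ν-1)`, which is the product of `ν + 1 < Fν²` (the lower bound on `F`) and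
`s < 3ν - 1` (as `(3ν-1)² - 2ν(ν+1) = (7ν-1)(ν-1)`).
-/

open Real

lemma sqrt_two_mul_mul_add_one_lt {ν : ℝ} (hν : 1 < ν) : √(2 * ν * (ν + 1)) < 3 * ν - 1 := by
  rw [sqrt_lt' (by linarith)]
  nlinarith

lemma add_one_lt_mul_sq_of_inv_add_inv_sq_lt {F ν : ℝ} (hν : 0 < ν)
    (hF : 1 / ν + 1 / ν ^ 2 < F) : ν + 1 < F * ν ^ 2 := by
  have h : (1 / ν + 1 / ν ^ 2) * ν ^ 2 = ν + 1 := by field_simp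
  rw [← h]
  exact mul_lt_mul_of_pos_right hF (by positivity)

lemma add_mul_sqrt_lt_sqrt {F ν : ℝ} (hν : 1 < ν) (hF : ν + 1 < F * ν ^ 2) :
    ν + 1 + F * ν * √(2 * ν * (ν + 1)) < √(8 * F ^ 2 * ν ^ 4 + ν ^ 2 + 2 * ν + 1) := by
  have hν0 : 0 < ν := by linarith
  have hF0 : 0 < F := pos_of_mul_pos_left (by linarith) (by positivity : 0 ≤ ν ^ 2)
  have hs0 : 0 ≤ √(2 * ν * (ν + 1)) := sqrt_nonneg _
  have hs2 : √(2 * ν * (ν + 1)) ^ 2 = 2 * ν * (ν + 1) := sq_sqrt (by positivity)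
  have hcross : (ν + 1) * √(2 * ν * (ν + 1)) < F * ν ^ 2 * (3 * ν - 1) :=
    mul_lt_mul'' hF (sqrt_two_mul_mul_add_one_lt hν) (by linarith) hs0
  have hsq : (ν + 1 + F * ν * √(2 * ν * (ν + 1))) ^ 2
      = (ν + 1) ^ 2 + 2 * F * ν * ((ν + 1) * √(2 * ν * (ν + 1)))
        + 2 * F ^ 2 * ν ^ 3 * (ν + 1) := by
    linear_combination F ^ 2 * ν ^ 2 * hs2
  apply lt_sqrt_of_sq_lt
  rw [hsq]
  linarith [mul_lt_mul_of_pos_left hcross (by positivity : 0 < 2 * F * ν)]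

theorem Hstar_gt_sonic_bound (F nu : ℝ) (hnu : 1 < nu)
    (hFlow : 1 / nu + 1 / nu ^ 2 < F) :
    (-nu - 1 + Real.sqrt (8 * F ^ 2 * nu ^ 4 + nu ^ 2 + 2 * nu + 1)) /
        (2 * nu ^ 2 * (nu + 1)) >
      F / Real.sqrt (2 * nu * (nu + 1)) := by
  have hnu0 : 0 < nu := by linarith
  have hs0 : 0 < √(2 * nu * (nu + 1)) := sqrt_pos.mpr (by positivity)
  have hs2 : √(2 * nu * (nu + 1)) * √(2 * nu * (nu + 1)) = 2 * nu * (nu + 1) :=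
    mul_self_sqrt (by positivity)
  have hD := add_mul_sqrt_lt_sqrt hnu (add_one_lt_mul_sq_of_inv_add_inv_sq_lt hnu0 hFlow)
  rw [gt_iff_lt, div_lt_div_iff₀ hs0 (by positivity)]
  calc F * (2 * nu ^ 2 * (nu + 1))
      = F * nu * √(2 * nu * (nu + 1)) * √(2 * nu * (nu + 1)) := by
        rw [mul_assoc _ (√_), hs2]; ring
    _ < (-nu - 1 + √(8 * F ^ 2 * nu ^ 4 + nu ^ 2 + 2 * nu + 1)) * √(2 * nu * (nu + 1)) :=
        mul_lt_mul_of_pos_right (by linarith) hs0
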